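/- For every integer s ≥ 2 and 0 < q < 1, the series Z(s) = Σ_{n≥1} p_s(q^n)/(1-q^n)^s converges, and (1-q)^s · Z(s) tends to 2^{ε(s)}·ζ(s) as q → 1⁻, where ε(s) = 1 if s is odd and 0 if s is even. -/

import Mathlib

open Filter Topology

noncomputable def ps (s : ℕ) (t : ℝ) : ℝ :=
  if Even s then t ^ (s / 2) else t ^ ((s - 1) / 2) * (1 + t)

/-!
Multiplied by `(1 - q) ^ s`, the `n`-th term becomes `p_s(q^m) / [m]_q^s` with `m = n + 1` and
`[m]_q = ∑ i < m, q ^ i`. This is continuous at `q = 1` with value `p_s(1) / m^s`, and since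
`p_s(t) ≤ 2 t^⌊s/2⌋` on `[0, 1]` and `[m]_q ≥ m q^((m-1)/2)` (AM–GM, pairing `q^i` with
`q^(m-1-i)`), it is at most `2 / m^2` uniformly in `q ∈ (0, 1)`. Dominated convergence for
series then gives the limit.
-/

open Finset

lemma ps_nonneg (s : ℕ) {t : ℝ} (ht : 0 ≤ t) : 0 ≤ ps s t := by
  unfold ps; split <;> positivity

lemma ps_le_two_mul_pow (s : ℕ) {t : ℝ} (ht₀ : 0 ≤ t) (ht₁ : t ≤ 1) :
    ps s t ≤ 2 * t ^ (s / 2) := by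
  unfold ps
  split_ifs with heven
  · linarith [pow_nonneg ht₀ (s / 2)]
  · obtain ⟨j, rfl⟩ := Nat.not_even_iff_odd.mp heven
    rw [show (2 * j + 1 - 1) / 2 = (2 * j + 1) / 2 by omega, mul_comm]
    gcongr
    linarith

lemma continuous_ps (s : ℕ) : Continuous (ps s) := by
  unfold ps; split <;> fun_prop

lemma ps_one (s : ℕ) : ps s 1 = if Odd s then 2 else 1 := by
  rcases Nat.even_or_odd s with h | h
  · simp [ps, h, Nat.not_odd_iff_even.mpr h]
  · simp [ps, Nat.not_even_iff_odd.mpr h, h]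
    norm_num

lemma sq_mul_pow_le_geom_sum_sq {q : ℝ} (hq : 0 ≤ q) (m : ℕ) :
    (m : ℝ) ^ 2 * q ^ (m - 1) ≤ (∑ i ∈ range m, q ^ i) ^ 2 := by
  have hpair : ∀ i ∈ range m, √(q ^ i) * √(q ^ (m - 1 - i)) = √(q ^ (m - 1)) := by
    intro i hi
    rw [← Real.sqrt_mul (by positivity), ← pow_add,
      Nat.add_sub_cancel' (Nat.le_sub_one_of_lt (mem_range.mp hi))]
  have hcs := Real.sum_sqrt_mul_sqrt_le (range m) (fun i => pow_nonneg hq i)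
    (fun i => pow_nonneg hq (m - 1 - i))
  rw [sum_congr rfl hpair, sum_range_reflect (fun i => q ^ i) m, sum_const, card_range,
    nsmul_eq_mul, Real.mul_self_sqrt (sum_nonneg fun i _ => pow_nonneg hq i)] at hcs
  calc (m : ℝ) ^ 2 * q ^ (m - 1) = (m * √(q ^ (m - 1))) ^ 2 := by
        rw [mul_pow, Real.sq_sqrt (by positivity)]
    _ ≤ _ := pow_le_pow_left₀ (by positivity) hcs 2

lemma one_le_geom_sum {q : ℝ} (hq : 0 ≤ q) {m : ℕ} (hm : m ≠ 0) :
    1 ≤ ∑ i ∈ range m, q ^ i := by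
  simpa using single_le_sum (fun i _ => pow_nonneg hq i) (mem_range.mpr (Nat.pos_of_ne_zero hm))

lemma pow_mul_div_geom_sum_pow_le {q : ℝ} (hq₀ : 0 ≤ q) (hq₁ : q ≤ 1) {m k s : ℕ} (hm : m ≠ 0)
    (hk : k ≠ 0) (hks : 2 * k ≤ s) :
    q ^ (m * k) / (∑ i ∈ range m, q ^ i) ^ s ≤ 1 / (m : ℝ) ^ 2 := by
  set S := ∑ i ∈ range m, q ^ i
  have hS : 1 ≤ S := one_le_geom_sum hq₀ hm
  have hm1 : (1 : ℝ) ≤ (m : ℝ) ^ 2 := one_le_pow₀ (by exact_mod_cast Nat.one_le_iff_ne_zero.mpr hm)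
  rw [div_le_div_iff₀ (by positivity) (by positivity), one_mul]
  calc q ^ (m * k) * (m : ℝ) ^ 2 ≤ q ^ ((m - 1) * k) * ((m : ℝ) ^ 2) ^ k := by
        gcongr ?_ * ?_
        · exact pow_le_pow_of_le_one hq₀ hq₁ (Nat.mul_le_mul_right k (Nat.sub_le m 1))
        · exact le_self_pow₀ hm1 hk
    _ = ((m : ℝ) ^ 2 * q ^ (m - 1)) ^ k := by rw [mul_pow, pow_mul, mul_comm]
    _ ≤ (S ^ 2) ^ k := by gcongr; exact sq_mul_pow_le_geom_sum_sq hq₀ m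
    _ = S ^ (2 * k) := (pow_mul S 2 k).symm
    _ ≤ S ^ s := pow_le_pow_right₀ hS hks

lemma one_sub_pow_mul_div_eq (s m : ℕ) {q : ℝ} (hq : q ≠ 1) (x : ℝ) :
    (1 - q) ^ s * (x / (1 - q ^ m) ^ s) = x / (∑ i ∈ range m, q ^ i) ^ s := by
  rw [← mul_neg_geom_sum, mul_pow, mul_div_assoc',
    mul_div_mul_left _ _ (pow_ne_zero s (sub_ne_zero.mpr hq.symm))]

lemma ps_div_geom_sum_pow_le {s : ℕ} (hs : 2 ≤ s) {q : ℝ} (hq₀ : 0 ≤ q) (hq₁ : q ≤ 1)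
    {m : ℕ} (hm : m ≠ 0) :
    ps s (q ^ m) / (∑ i ∈ range m, q ^ i) ^ s ≤ 2 / (m : ℝ) ^ 2 := by
  calc ps s (q ^ m) / (∑ i ∈ range m, q ^ i) ^ s
      ≤ 2 * (q ^ (m * (s / 2)) / (∑ i ∈ range m, q ^ i) ^ s) := by
        rw [mul_div_assoc', pow_mul]
        gcongr
        exact ps_le_two_mul_pow s (by positivity) (pow_le_one₀ hq₀ hq₁)
    _ ≤ 2 * (1 / (m : ℝ) ^ 2) := by
        gcongr 2 * ?_
        exact pow_mul_div_geom_sum_pow_le (k := s / 2) (s := s) hq₀ hq₁ hm (by omega) (by omega)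
    _ = 2 / (m : ℝ) ^ 2 := mul_one_div 2 _

lemma tendsto_ps_div_geom_sum_pow (s : ℕ) {m : ℕ} (hm : m ≠ 0) :
    Tendsto (fun q : ℝ => ps s (q ^ m) / (∑ i ∈ range m, q ^ i) ^ s) (𝓝 1)
      (𝓝 (ps s 1 / (m : ℝ) ^ s)) := by
  have hnum : Tendsto (fun q : ℝ => ps s (q ^ m)) (𝓝 1) (𝓝 (ps s 1)) :=
    ((continuous_ps s).comp (continuous_pow m)).tendsto' 1 _ (by simp)
  have hden : Tendsto (fun q : ℝ => (∑ i ∈ range m, q ^ i) ^ s) (𝓝 1) (𝓝 ((m : ℝ) ^ s)) :=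
    ((continuous_finsetSum (range m) fun i _ => continuous_pow i).pow s).tendsto' 1 _ (by simp)
  exact hnum.div hden (by positivity)

lemma summable_two_div_succ_sq : Summable fun n : ℕ => 2 / ((n : ℝ) + 1) ^ 2 := by
  have := (summable_nat_add_iff 1).mpr (Real.summable_one_div_nat_pow.mpr one_lt_two)
  simpa [div_eq_mul_inv] using this.mul_left 2

lemma one_sub_pow_mul_term_nonneg (s n : ℕ) {q : ℝ} (hq₀ : 0 ≤ q) (hq₁ : q < 1) :
    0 ≤ (1 - q) ^ s * (ps s (q ^ (n + 1)) / (1 - q ^ (n + 1)) ^ s) := by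
  rw [one_sub_pow_mul_div_eq s _ hq₁.ne]
  exact div_nonneg (ps_nonneg s (by positivity)) (by positivity)

lemma one_sub_pow_mul_term_le {s : ℕ} (hs : 2 ≤ s) (n : ℕ) {q : ℝ} (hq₀ : 0 ≤ q) (hq₁ : q < 1) :
    (1 - q) ^ s * (ps s (q ^ (n + 1)) / (1 - q ^ (n + 1)) ^ s) ≤ 2 / ((n : ℝ) + 1) ^ 2 := by
  rw [one_sub_pow_mul_div_eq s _ hq₁.ne]
  exact_mod_cast ps_div_geom_sum_pow_le hs hq₀ hq₁.le n.succ_ne_zero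

lemma tendsto_one_sub_pow_mul_term (s n : ℕ) :
    Tendsto (fun q : ℝ => (1 - q) ^ s * (ps s (q ^ (n + 1)) / (1 - q ^ (n + 1)) ^ s)) (𝓝[≠] 1)
      (𝓝 ((if Odd s then 2 else 1) * (1 / ((n : ℝ) + 1) ^ s))) := by
  have h := (tendsto_ps_div_geom_sum_pow s n.succ_ne_zero).mono_left
    (nhdsWithin_le_nhds (s := {1}ᶜ))
  rw [ps_one, ← mul_one_div, Nat.cast_succ] at h
  refine h.congr' ?_
  filter_upwards [self_mem_nhdsWithin] with q hq
  exact (one_sub_pow_mul_div_eq s _ hq _).symm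

theorem Zs_summable_and_limit (s : ℕ) (hs : 2 ≤ s) :
    (∀ q : ℝ, 0 < q → q < 1 →
      Summable (fun n : ℕ => ps s (q ^ (n + 1)) / (1 - q ^ (n + 1)) ^ s)) ∧
    Tendsto (fun q : ℝ =>
        (1 - q) ^ s * ∑' n : ℕ, ps s (q ^ (n + 1)) / (1 - q ^ (n + 1)) ^ s)
      (nhdsWithin 1 (Set.Ioo 0 1))
      (nhds ((if Odd s then 2 else 1) * ∑' n : ℕ, 1 / ((n : ℝ) + 1) ^ s)) := by
  constructor
  · intro q hq₀ hq₁
    have hscaled := summable_two_div_succ_sq.of_nonneg_of_le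
      (fun n => one_sub_pow_mul_term_nonneg s n hq₀.le hq₁)
      (fun n => one_sub_pow_mul_term_le hs n hq₀.le hq₁)
    refine (hscaled.mul_left ((1 - q) ^ s)⁻¹).congr fun n => ?_
    exact inv_mul_cancel_left₀ (pow_ne_zero s (sub_ne_zero.mpr hq₁.ne')) _
  · simp only [← tsum_mul_left]
    refine tendsto_tsum_of_dominated_convergence summable_two_div_succ_sq
      (fun n => (tendsto_one_sub_pow_mul_term s n).mono_left
        (nhdsWithin_mono 1 fun q hq => hq.2.ne)) ?_
    filter_upwards [self_mem_nhdsWithin] with q hq n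
    rw [Real.norm_of_nonneg (one_sub_pow_mul_term_nonneg s n hq.1.le hq.2)]
    exact one_sub_pow_mul_term_le hs n hq.1.le hq.2
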